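/- arXiv:2103.05611 — 9 statements merged into one kernel-verified Lean document; each statement's English description precedes it below -/
import Mathlib

section
/- For q ∈ (0,1) and p ∈ [q, 1], the inequality q/(1 − √((1−p)(1−q)))² ≥ (1−q)/(1 − (1−q)(1−p)) holds if and only if √(1−p) ≥ (2(1−q)−1)/√(1−q). In particular, if q ≥ 1/2 the inequality holds for all p ∈ [q, 1], and if q ≤ 1/2 it holds exactly when p ≤ 1 − (1−2q)²/(1−q). -/
/-!
Write `a = √(1 - p)` and `b = √(1 - q)`, so that `q = 1 - b²` and `(1 - q)(1 - p) = (ab)²`.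
Since `1 - (ab)² = (1 - ab)(1 + ab)`, the inequality becomes `b²(1 - ab) ≤ (1 - b²)(1 + ab)`,
in which the cubic terms cancel, leaving the linear condition `2b² - 1 ≤ ab`.
-/

open Real

lemma div_one_sub_sq_le_div_one_sub_sq_iff {c d t : ℝ} (ht : |t| < 1) :
    c / (1 - t ^ 2) ≤ d / (1 - t) ^ 2 ↔ c * (1 - t) ≤ d * (1 + t) := by
  obtain ⟨ht₀, ht₁⟩ := abs_lt.mp ht
  have hsub : 0 < 1 - t := by linarith
  calc c / (1 - t ^ 2) ≤ d / (1 - t) ^ 2 ↔ c * (1 - t) * (1 - t) ≤ d * (1 + t) * (1 - t) := by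
        rw [div_le_div_iff₀ (by nlinarith) (by positivity)]
        ring_nf
    _ ↔ c * (1 - t) ≤ d * (1 + t) := mul_le_mul_iff_left₀ hsub

lemma sq_div_le_one_sub_sq_div_iff {b t : ℝ} (ht : |t| < 1) :
    b ^ 2 / (1 - t ^ 2) ≤ (1 - b ^ 2) / (1 - t) ^ 2 ↔ 2 * b ^ 2 - 1 ≤ t := by
  rw [div_one_sub_sq_le_div_one_sub_sq_iff ht]
  constructor <;> intro h <;> linarith

lemma div_le_div_one_sub_sqrt_sq_iff {p q : ℝ} (hq₀ : 0 < q) (hq₁ : q < 1) (hp₀ : 0 ≤ p)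
    (hp₁ : p ≤ 1) :
    (1 - q) / (1 - (1 - q) * (1 - p)) ≤ q / (1 - √((1 - p) * (1 - q))) ^ 2 ↔
      (2 * (1 - q) - 1) / √(1 - q) ≤ √(1 - p) := by
  set a := √(1 - p)
  set b := √(1 - q)
  have ha : 0 ≤ a := sqrt_nonneg _
  have hb : 0 < b := sqrt_pos.2 (by linarith)
  have ha₁ : a ≤ 1 := sqrt_le_one.mpr (by linarith)
  have hb₁ : b < 1 := (sqrt_lt' one_pos).mpr (by linarith)
  have ha2 : a ^ 2 = 1 - p := sq_sqrt (by linarith)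
  have hb2 : b ^ 2 = 1 - q := sq_sqrt (by linarith)
  have hab : |a * b| < 1 := by
    rw [abs_of_nonneg (by positivity)]
    nlinarith
  have hlhs : (1 - q) / (1 - (1 - q) * (1 - p)) = b ^ 2 / (1 - (a * b) ^ 2) := by
    rw [mul_pow, ha2, hb2, mul_comm]
  have hrhs : q / (1 - √((1 - p) * (1 - q))) ^ 2 = (1 - b ^ 2) / (1 - a * b) ^ 2 := by
    rw [sqrt_mul (by linarith), hb2, sub_sub_cancel]
  rw [hlhs, hrhs, sq_div_le_one_sub_sq_div_iff hab, div_le_iff₀ hb, hb2]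

/-- For q ∈ (0,1) and p ∈ [q,1],
q/(1 − √((1−p)(1−q)))² ≥ (1−q)/(1 − (1−q)(1−p)) iff √(1−p) ≥ (2(1−q)−1)/√(1−q).
If q ≥ 1/2 the inequality holds for all p ∈ [q,1]; if q ≤ 1/2 it holds exactly
when p ≤ 1 − (1−2q)²/(1−q). -/
theorem stmt_6 (q : ℝ) (hq : q ∈ Set.Ioo (0:ℝ) 1) :
    (∀ p ∈ Set.Icc q 1,
      ((1 - q)/(1 - (1 - q)*(1 - p)) ≤ q / (1 - Real.sqrt ((1 - p)*(1 - q)))^2 ↔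
        (2*(1 - q) - 1)/Real.sqrt (1 - q) ≤ Real.sqrt (1 - p))) ∧
    (1/2 ≤ q → ∀ p ∈ Set.Icc q 1,
      (1 - q)/(1 - (1 - q)*(1 - p)) ≤ q / (1 - Real.sqrt ((1 - p)*(1 - q)))^2) ∧
    (q ≤ 1/2 → ∀ p ∈ Set.Icc q 1,
      ((1 - q)/(1 - (1 - q)*(1 - p)) ≤ q / (1 - Real.sqrt ((1 - p)*(1 - q)))^2 ↔
        p ≤ 1 - (1 - 2*q)^2/(1 - q))) := by
  obtain ⟨hq₀, hq₁⟩ := hq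
  have key : ∀ p ∈ Set.Icc q 1,
      ((1 - q)/(1 - (1 - q)*(1 - p)) ≤ q / (1 - √((1 - p)*(1 - q)))^2 ↔
        (2*(1 - q) - 1)/√(1 - q) ≤ √(1 - p)) :=
    fun p hp => div_le_div_one_sub_sqrt_sq_iff hq₀ hq₁ (hq₀.le.trans hp.1) hp.2
  refine ⟨key, fun hq₂ p hp => (key p hp).mpr ?_, fun hq₂ p hp => ?_⟩
  · exact (div_nonpos_of_nonpos_of_nonneg (by linarith) (sqrt_nonneg _)).trans (sqrt_nonneg _)
  · rw [key p hp, le_sqrt (div_nonneg (by linarith) (sqrt_nonneg _)) (by linarith [hp.2]),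
      div_pow, sq_sqrt (by linarith), le_sub_comm]
    ring_nf
end

section
/- For q ∈ (0, 1/4], the supremum over p ∈ [0,1] of min{ p·q/(1 − √((1−p)(1−q)))², p, p(1−q)/(1 − (1−q)(1−p)) } equals 2√q/(1+√q), attained at p = 2√q/(1+√q). -/
/-!
Write `q = s²` and `P = 2s/(1+s)`. The identity `(1 - P)(1 - s²) = (1 - s)²` makes the first
term of the minimum equal to `P` at `p = P`, and the third term is at least `P` there exactly
because `s ≤ 1/2`. Below `P` the middle term `p` bounds the minimum. Above `P`, with
`u = √((1-p)(1-s²)) ≤ 1 - s`, the bound of the first term by `P` reduces to the polynomial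
inequality `(1 - s² - u²) s ≤ 2 (1 - s)(1 - u)²`, whose difference factors as
`(1 - s - u)((1 - s)(2 + s) - (2 - s)u)`.
-/

open Real

lemma one_sub_two_mul_div_one_add_mul_one_sub_sq {s : ℝ} (hs : 1 + s ≠ 0) :
    (1 - 2 * s / (1 + s)) * (1 - s ^ 2) = (1 - s) ^ 2 := by
  field_simp
  ring

lemma one_sub_sq_sub_sq_mul_le {s u : ℝ} (hs : 0 ≤ s) (hu : 0 ≤ u) (hus : u ≤ 1 - s) :
    (1 - s ^ 2 - u ^ 2) * s ≤ 2 * (1 - s) * (1 - u) ^ 2 := by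
  have hfactor : 0 ≤ (1 - s - u) * ((1 - s) * (2 + s) - (2 - s) * u) :=
    mul_nonneg (by linarith) (by nlinarith)
  linear_combination hfactor

lemma mul_sq_div_one_sub_sq_le {s u p : ℝ} (hs0 : 0 < s) (hs1 : s < 1) (hu : 0 ≤ u)
    (hus : u ≤ 1 - s) (hp : (1 - p) * (1 - s ^ 2) = u ^ 2) :
    p * s ^ 2 / (1 - u) ^ 2 ≤ 2 * s / (1 + s) := by
  rw [div_le_div_iff₀ (by nlinarith) (by linarith)]
  have key := one_sub_sq_sub_sq_mul_le hs0.le hu hus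
  nlinarith [mul_pos hs0 (sub_pos.2 hs1)]

lemma le_mul_one_sub_sq_div {s x : ℝ} (hx : 0 ≤ x) (hs0 : 0 < s) (hs : s ≤ 1 / 2) :
    x ≤ x * (1 - s ^ 2) / (1 - (1 - s) ^ 2) := by
  rw [le_div_iff₀ (by nlinarith)]
  nlinarith

/-- For q ∈ (0, 1/4], the supremum over p ∈ [0,1] of
min{ p·q/(1 − √((1−p)(1−q)))², p, p(1−q)/(1 − (1−q)(1−p)) }
equals 2√q/(1+√q), attained at p = 2√q/(1+√q). -/
theorem stmt_8 (q : ℝ) (hq : q ∈ Set.Ioc (0:ℝ) (1/4))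
    (f : ℝ → ℝ)
    (hf : ∀ p : ℝ, f p = min (min (p * q / (1 - Real.sqrt ((1 - p)*(1 - q)))^2) p)
      (p*(1 - q)/(1 - (1 - q)*(1 - p)))) :
    2*Real.sqrt q/(1 + Real.sqrt q) ∈ Set.Icc (0:ℝ) 1 ∧
    f (2*Real.sqrt q/(1 + Real.sqrt q)) = 2*Real.sqrt q/(1 + Real.sqrt q) ∧
    ∀ p ∈ Set.Icc (0:ℝ) 1, f p ≤ 2*Real.sqrt q/(1 + Real.sqrt q) := by
  obtain ⟨hq0, hq4⟩ := hq
  obtain ⟨s, hs0, rfl⟩ : ∃ s, 0 < s ∧ q = s ^ 2 := ⟨√q, sqrt_pos.2 hq0, (sq_sqrt hq0.le).symm⟩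
  have hs : s ≤ 1 / 2 := by nlinarith
  rw [sqrt_sq hs0.le]
  set P := 2 * s / (1 + s)
  have hP : (1 - P) * (1 - s ^ 2) = (1 - s) ^ 2 :=
    one_sub_two_mul_div_one_add_mul_one_sub_sq (by linarith)
  have hP0 : 0 ≤ P := by positivity
  refine ⟨⟨hP0, (div_le_one (by linarith)).2 (by linarith)⟩, ?_, fun p ⟨_, hp1⟩ => ?_⟩
  · rw [hf, hP, mul_comm (1 - s ^ 2), hP, sqrt_sq (by linarith), sub_sub_cancel,
      mul_div_cancel_right₀ _ (by positivity), min_self]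
    exact min_eq_left (le_mul_one_sub_sq_div hP0 hs0 hs)
  rcases le_or_gt p P with hpP | hPp
  · exact (hf p ▸ min_le_of_left_le (min_le_right _ _)).trans hpP
  set u := √((1 - p) * (1 - s ^ 2))
  have hu : u ^ 2 = (1 - p) * (1 - s ^ 2) := sq_sqrt (by nlinarith)
  have hus : u ≤ 1 - s := (sqrt_le_left (by linarith)).2 (by nlinarith)
  calc f p ≤ p * s ^ 2 / (1 - u) ^ 2 := hf p ▸ min_le_of_left_le (min_le_left _ _)
    _ ≤ P := mul_sq_div_one_sub_sq_le hs0 (by linarith) (sqrt_nonneg _) hus hu.symm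
end

section
/- For q ∈ [1/4, 1/2], the supremum over p ∈ [0,1] of min{ p·q/(1 − √((1−p)(1−q)))², p, p(1−q)/(1 − (1−q)(1−p)) } equals (3−4q)/(4(1−q)), attained at p = q(3−4q)/(1−q). -/
/-!
Write `p⋆ = q(3-4q)/(1-q)` and `r = (3-4q)/(4(1-q))`. The first term of the minimum decreases
and the third increases in `p`, and they cross at `p⋆`: there `(1-p⋆)(1-q) = (1-2q)²`, so the
square root is explicit and both terms equal `r`. Since `q ≥ 1/4` also gives `r ≤ p⋆`, the
minimum at `p⋆` is `r`; left of `p⋆` the third term is at most `r`, right of it the first one.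
-/

namespace MaximinRatio

variable {p q : ℝ}

lemma optimal_mem_Icc (hq0 : 0 ≤ q) (hq : q ≤ 3/4) : q*(3 - 4*q)/(1 - q) ∈ Set.Icc (0:ℝ) 1 := by
  have h1q : 0 < 1 - q := by linarith
  refine ⟨div_nonneg (by nlinarith) h1q.le, ?_⟩
  rw [div_le_one h1q]
  nlinarith [sq_nonneg (1 - 2*q)]

lemma ratio_le_optimal (hq1 : 1/4 ≤ q) (hq3 : q ≤ 3/4) :
    (3 - 4*q)/(4*(1 - q)) ≤ q*(3 - 4*q)/(1 - q) := by
  rw [div_le_div_iff₀ (by linarith) (by linarith)]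
  nlinarith [mul_nonneg (mul_nonneg (by linarith : (0:ℝ) ≤ 4*q - 1)
    (by linarith : (0:ℝ) ≤ 3 - 4*q)) (by linarith : (0:ℝ) ≤ 1 - q)]

lemma one_sub_optimal_mul (hq : q ≠ 1) : (1 - q*(3 - 4*q)/(1 - q))*(1 - q) = (1 - 2*q)^2 := by
  have : 1 - q ≠ 0 := sub_ne_zero.2 (Ne.symm hq)
  field_simp
  ring

lemma sqrt_optimal (hq : q ≤ 1/2) :
    Real.sqrt ((1 - q*(3 - 4*q)/(1 - q))*(1 - q)) = 1 - 2*q := by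
  rw [one_sub_optimal_mul (by linarith), Real.sqrt_sq (by linarith)]

lemma sqrt_le_of_optimal_le (hq : q ≤ 1/2) (hp : q*(3 - 4*q)/(1 - q) ≤ p) :
    Real.sqrt ((1 - p)*(1 - q)) ≤ 1 - 2*q := by
  rw [← sqrt_optimal hq]
  exact Real.sqrt_le_sqrt (mul_le_mul_of_nonneg_right (by linarith) (by linarith))

lemma first_term_optimal (hq0 : q ≠ 0) (hq1 : q ≠ 1) :
    q*(3 - 4*q)/(1 - q) * q / (1 - (1 - 2*q))^2 = (3 - 4*q)/(4*(1 - q)) := by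
  have : 1 - q ≠ 0 := sub_ne_zero.2 (Ne.symm hq1)
  field_simp
  ring

lemma third_term_optimal (hq0 : q ≠ 0) (hq1 : q ≠ 1) :
    q*(3 - 4*q)/(1 - q) * (1 - q) / (1 - (1 - q)*(1 - q*(3 - 4*q)/(1 - q)))
      = (3 - 4*q)/(4*(1 - q)) := by
  have : 1 - q ≠ 0 := sub_ne_zero.2 (Ne.symm hq1)
  have hden : 1 - (1 - q)*(1 - q*(3 - 4*q)/(1 - q)) = 4*q*(1 - q) := by
    field_simp
    ring
  rw [hden]
  field_simp

/-- With `s = √((1-p)(1-q))`, the bound is `(1-2q-s)(3-2q-3s) ≥ 0` after clearing denominators. -/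
lemma first_term_le {s : ℝ} (hq0 : 0 < q) (hs0 : 0 ≤ s) (hs : s ≤ 1 - 2*q)
    (hs2 : s^2 = (1 - p)*(1 - q)) :
    p * q / (1 - s)^2 ≤ (3 - 4*q)/(4*(1 - q)) := by
  rw [div_le_div_iff₀ (pow_pos (by linarith) 2) (by linarith)]
  nlinarith [mul_nonneg (by linarith : (0:ℝ) ≤ 1 - 2*q - s) (by linarith : (0:ℝ) ≤ 3 - 2*q - 3*s)]

lemma third_term_le (hq0 : 0 < q) (hq1 : q < 1) (hp0 : 0 ≤ p)
    (hp : p ≤ q*(3 - 4*q)/(1 - q)) :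
    p*(1 - q)/(1 - (1 - q)*(1 - p)) ≤ (3 - 4*q)/(4*(1 - q)) := by
  have hpq : p*(1 - q) ≤ q*(3 - 4*q) := (le_div_iff₀ (by linarith)).1 hp
  rw [div_le_div_iff₀ (by nlinarith) (by linarith)]
  nlinarith

end MaximinRatio

open MaximinRatio in
/-- For q ∈ [1/4, 1/2], the supremum over p ∈ [0,1] of
min{ p·q/(1 − √((1−p)(1−q)))², p, p(1−q)/(1 − (1−q)(1−p)) }
equals (3−4q)/(4(1−q)), attained at p = q(3−4q)/(1−q). -/
theorem stmt_9 (q : ℝ) (hq : q ∈ Set.Icc (1/4 : ℝ) (1/2))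
    (f : ℝ → ℝ)
    (hf : ∀ p : ℝ, f p = min (min (p * q / (1 - Real.sqrt ((1 - p)*(1 - q)))^2) p)
      (p*(1 - q)/(1 - (1 - q)*(1 - p)))) :
    q*(3 - 4*q)/(1 - q) ∈ Set.Icc (0:ℝ) 1 ∧
    f (q*(3 - 4*q)/(1 - q)) = (3 - 4*q)/(4*(1 - q)) ∧
    ∀ p ∈ Set.Icc (0:ℝ) 1, f p ≤ (3 - 4*q)/(4*(1 - q)) := by
  obtain ⟨hq1, hq2⟩ := hq
  have hq0 : 0 < q := by linarith
  refine ⟨optimal_mem_Icc hq0.le (by linarith), ?_, fun p ⟨hp0, hp1⟩ => ?_⟩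
  · rw [hf, sqrt_optimal hq2, first_term_optimal hq0.ne' (by linarith),
      third_term_optimal hq0.ne' (by linarith), min_eq_left (ratio_le_optimal hq1 (by linarith)),
      min_self]
  · rw [hf]
    rcases le_total p (q*(3 - 4*q)/(1 - q)) with hp | hp
    · exact (min_le_right _ _).trans (third_term_le hq0 (by linarith) hp0 hp)
    · exact (min_le_left _ _).trans <| (min_le_left _ _).trans <|
        first_term_le hq0 (Real.sqrt_nonneg _) (sqrt_le_of_optimal_le hq2 hp)
          (Real.sq_sqrt (mul_nonneg (by linarith) (by linarith)))
end

section
/- For q ∈ [e^{-1/e}, 1], the supremum over p ∈ [1/(1+log(1/q)), 1] of min{ (q/e)·μ_q(p)·e^{μ_q(p)}·p, p, p·e·log(1/q)·q^p } equals e·q·log(1/q), attained at p = 1. -/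
/-! At `p = 1` we have `μ 1 = 1`, and the minimum is its third term `e q log(1/q)`
because `e log(1/q) ≤ 1`. For every other `p` the third term alone is already small enough:
`p q^p ≤ q` on `(0, 1]` as soon as `log(1/q) ≤ 1`, since
`log (p q^p) ≤ (p - 1) + p log q ≤ log q`. -/

open Real

theorem Real.log_one_div_le_of_exp_neg_le {q a : ℝ} (h : exp (-a) ≤ q) : log (1 / q) ≤ a := by
  have hq : 0 < q := (exp_pos _).trans_le h
  rw [one_div, log_inv, neg_le]
  exact (le_log_iff_exp_le hq).mpr h

theorem Real.mul_rpow_self_le {q p : ℝ} (hq : 0 < q) (hlog : log (1 / q) ≤ 1)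
    (hp0 : 0 < p) (hp1 : p ≤ 1) : p * q ^ p ≤ q := by
  have hpq : 0 < p * q ^ p := mul_pos hp0 (rpow_pos_of_pos hq p)
  rw [← log_le_log_iff hpq hq, log_mul hp0.ne' (rpow_pos_of_pos hq p).ne', log_rpow hq]
  rw [one_div, log_inv] at hlog
  nlinarith [log_le_sub_one_of_pos hp0]

theorem stmt_12_general (q : ℝ) (hq : q ∈ Set.Icc (Real.exp (-(Real.exp 1)⁻¹)) 1)
    (η : ℝ)
    (μ : ℝ → ℝ)
    (hμ : ∀ p : ℝ, μ p = (2 + η*(1 - p) + Real.sqrt ((η*(1 - p))^2 + 4*η*(1 - p)))/2)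
    (f : ℝ → ℝ)
    (hf : ∀ p : ℝ, f p = min (min ((q/Real.exp 1) * μ p * Real.exp (μ p) * p) p)
      (p * Real.exp 1 * Real.log (1/q) * q ^ p)) :
    f 1 = Real.exp 1 * q * Real.log (1/q) ∧
    ∀ p ∈ Set.Icc (1/(1 + Real.log (1/q))) 1, f p ≤ Real.exp 1 * q * Real.log (1/q) := by
  obtain ⟨hq_lower, hq_upper⟩ := hq
  have hq0 : 0 < q := (exp_pos _).trans_le hq_lower
  have hlog_nonneg : 0 ≤ log (1 / q) := log_nonneg (one_le_one_div hq0 hq_upper)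
  have hlog_le : log (1 / q) ≤ (exp 1)⁻¹ := log_one_div_le_of_exp_neg_le hq_lower
  have hlog_le_one : log (1 / q) ≤ 1 := hlog_le.trans (inv_le_one_of_one_le₀ (one_le_exp zero_le_one))
  have he_log : exp 1 * log (1 / q) ≤ 1 := by
    simpa [(exp_pos 1).ne'] using mul_le_mul_of_nonneg_left hlog_le (exp_pos 1).le
  have hμ_one : μ 1 = 1 := by rw [hμ]; norm_num
  refine ⟨?_, fun p ⟨hp_lower, hp_upper⟩ => ?_⟩
  · have hfirst : q / exp 1 * 1 * exp 1 * 1 = q := by field_simp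
    have hthird : 1 * exp 1 * log (1 / q) * q ≤ q := by nlinarith
    rw [hf, hμ_one, rpow_one, hfirst, min_eq_left hq_upper, min_eq_right hthird]
    ring
  · have hp0 : 0 < p := lt_of_lt_of_le (by positivity) hp_lower
    calc f p ≤ p * exp 1 * log (1 / q) * q ^ p := by rw [hf]; exact min_le_right _ _
      _ = exp 1 * log (1 / q) * (p * q ^ p) := by ring
      _ ≤ exp 1 * log (1 / q) * q := by
        gcongr; exact mul_rpow_self_le hq0 hlog_le_one hp0 hp_upper
      _ = exp 1 * q * log (1 / q) := by ring

/-- For q ∈ [e^{-1/e}, 1], the supremum over p ∈ [1/(1+log(1/q)), 1]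
of min{ (q/e)·μ_q(p)·e^{μ_q(p)}·p, p, p·e·log(1/q)·q^p } equals e·q·log(1/q),
attained at p = 1. -/
theorem stmt_12 (q : ℝ) (hq : q ∈ Set.Icc (Real.exp (-(Real.exp 1)⁻¹)) 1)
    (η : ℝ) (hη : η = Real.log (1/q))
    (μ : ℝ → ℝ)
    (hμ : ∀ p : ℝ, μ p = (2 + η*(1 - p) + Real.sqrt ((η*(1 - p))^2 + 4*η*(1 - p)))/2)
    (f : ℝ → ℝ)
    (hf : ∀ p : ℝ, f p = min (min ((q/Real.exp 1) * μ p * Real.exp (μ p) * p) p)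
      (p * Real.exp 1 * Real.log (1/q) * q ^ p)) :
    f 1 = Real.exp 1 * q * Real.log (1/q) ∧
    ∀ p ∈ Set.Icc (1/(1 + Real.log (1/q))) 1, f p ≤ Real.exp 1 * q * Real.log (1/q) :=
  stmt_12_general q hq η μ hμ f hf
end

section
/- For any price mechanism given by a cdf Ψ on [0,∞) and any scalar γ > 1 (with incumbent price w = 1 and conversion rate q ∈ (0,1)): the deterministic mechanism posting price γ > 1 achieves worst-case competitive ratio 0 against the class of regular distributions with conversion rate q at price 1. Concretely, there exists a regular distribution F with F̄(1) = q, opt(F) > 0, and γ·F̄(γ) = 0. -/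
/-!
The witness is the equal-revenue-type tail `F̄(v) = 1 / (1 + c v)` with `c = (1 - q) / q`, so
that `F̄(1) = q`, cut off at a point `T` strictly between `1` and `γ`. On `(0, T)` its virtual
value is the constant `-1 / c`, so it is regular; it sells with positive probability at price
`1`, yet nothing at price `γ > T`.
-/

/-- A complementary cdf of a regular distribution on [0,∞): nonincreasing, valued
in [0,1], vanishing at infinity, with a density (differentiable) except possibly at
the maximum M of its support, and nondecreasing virtual value v − F̄(v)/f(v) where
f = −F̄'. -/
def IsRegularCCDF (Fbar : ℝ → ℝ) : Prop :=
  AntitoneOn Fbar (Set.Ici 0) ∧ (∀ v ∈ Set.Ici (0:ℝ), Fbar v ∈ Set.Icc (0:ℝ) 1) ∧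
  Filter.Tendsto Fbar Filter.atTop (nhds 0) ∧
  ∃ M : ℝ, 0 < M ∧ (∀ v : ℝ, M < v → Fbar v = 0) ∧
    (∀ v ∈ Set.Ioo (0:ℝ) M, DifferentiableAt ℝ Fbar v) ∧
    MonotoneOn (fun v => v - Fbar v / (-(deriv Fbar v))) (Set.Ioo 0 M)

open Filter Set

noncomputable def truncInvLinear (c T v : ℝ) : ℝ :=
  if v ≤ T then (1 + c * v)⁻¹ else 0

section truncInvLinear

variable {c T v : ℝ}

theorem truncInvLinear_of_le (h : v ≤ T) : truncInvLinear c T v = (1 + c * v)⁻¹ :=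
  if_pos h

theorem truncInvLinear_of_lt (h : T < v) : truncInvLinear c T v = 0 :=
  if_neg h.not_ge

theorem truncInvLinear_mem_Icc (hc : 0 ≤ c) (hv : 0 ≤ v) :
    truncInvLinear c T v ∈ Icc (0 : ℝ) 1 := by
  rcases le_or_gt v T with hvT | hvT
  · rw [truncInvLinear_of_le hvT]
    exact ⟨by positivity, inv_le_one_of_one_le₀ (by nlinarith)⟩
  · rw [truncInvLinear_of_lt hvT]
    exact ⟨le_rfl, zero_le_one⟩

theorem antitoneOn_truncInvLinear (hc : 0 ≤ c) : AntitoneOn (truncInvLinear c T) (Ici 0) := by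
  intro a ha b hb hab
  rcases le_or_gt b T with hbT | hbT
  · rw [truncInvLinear_of_le (hab.trans hbT), truncInvLinear_of_le hbT]
    exact inv_anti₀ (by nlinarith [mem_Ici.mp ha]) (by nlinarith)
  · rw [truncInvLinear_of_lt hbT]
    exact (truncInvLinear_mem_Icc hc ha).1

theorem truncInvLinear_eventuallyEq (hv : v < T) :
    truncInvLinear c T =ᶠ[nhds v] fun x => (1 + c * x)⁻¹ := by
  filter_upwards [Iio_mem_nhds hv] with x hx using truncInvLinear_of_le hx.le

theorem hasDerivAt_truncInvLinear (hv : v < T) (hne : 1 + c * v ≠ 0) :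
    HasDerivAt (truncInvLinear c T) (-c / (1 + c * v) ^ 2) v := by
  have hlin : HasDerivAt (fun x : ℝ => 1 + c * x) c v := by
    simpa using ((hasDerivAt_id v).const_mul c).const_add 1
  exact (hlin.inv hne).congr_of_eventuallyEq (truncInvLinear_eventuallyEq hv)

theorem virtualValue_truncInvLinear (hc : 0 < c) (hv : v ∈ Ioo 0 T) :
    v - truncInvLinear c T v / -deriv (truncInvLinear c T) v = -(1 / c) := by
  have hne : 1 + c * v ≠ 0 := by nlinarith [hv.1]
  rw [(hasDerivAt_truncInvLinear hv.2 hne).deriv, truncInvLinear_of_le hv.2.le]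
  field_simp
  ring

theorem isRegularCCDF_truncInvLinear (hc : 0 < c) (hT : 0 < T) :
    IsRegularCCDF (truncInvLinear c T) := by
  refine ⟨antitoneOn_truncInvLinear hc.le, fun v hv => truncInvLinear_mem_Icc hc.le hv, ?_,
    T, hT, fun v hv => truncInvLinear_of_lt hv, ?_, ?_⟩
  · refine tendsto_const_nhds.congr' ?_
    filter_upwards [eventually_gt_atTop T] with v hv using (truncInvLinear_of_lt hv).symm
  · intro v hv
    exact (hasDerivAt_truncInvLinear hv.2 (by nlinarith [hv.1])).differentiableAt
  · exact fun a ha b hb _ =>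
      (virtualValue_truncInvLinear hc ha).trans_le (virtualValue_truncInvLinear hc hb).ge

end truncInvLinear

theorem IsRegularCCDF.bddAbove_revenue {Fbar : ℝ → ℝ} (hF : IsRegularCCDF Fbar) :
    BddAbove ((fun p => p * Fbar p) '' Ici 0) := by
  obtain ⟨-, hIcc, -, M, hM, hvanish, -⟩ := hF
  refine ⟨M, ?_⟩
  rintro _ ⟨p, hp, rfl⟩
  dsimp only
  rcases le_or_gt p M with hpM | hpM
  · calc p * Fbar p ≤ p * 1 := mul_le_mul_of_nonneg_left (hIcc p hp).2 hp
      _ ≤ M := by rwa [mul_one]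
  · rw [hvanish p hpM, mul_zero]
    exact hM.le

theorem IsRegularCCDF.sSup_revenue_pos {Fbar : ℝ → ℝ} (hF : IsRegularCCDF Fbar) {p : ℝ}
    (hp : 0 ≤ p) (hpos : 0 < p * Fbar p) : 0 < sSup ((fun p => p * Fbar p) '' Ici 0) :=
  hpos.trans_le (le_csSup hF.bddAbove_revenue ⟨p, hp, rfl⟩)

/-- For any γ > 1 (incumbent price w = 1, conversion rate q ∈ (0,1)),
the deterministic mechanism posting price γ has worst-case competitive ratio 0
against regular distributions with conversion rate q at price 1: there is a regular
distribution F with F̄(1) = q, opt(F) = sup_{p ≥ 0} p·F̄(p) > 0, and γ·F̄(γ) = 0. -/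
theorem stmt_14 (γ q : ℝ) (hγ : 1 < γ) (hq : q ∈ Set.Ioo (0:ℝ) 1) :
    ∃ Fbar : ℝ → ℝ, IsRegularCCDF Fbar ∧ Fbar 1 = q ∧
      0 < sSup ((fun p => p * Fbar p) '' Set.Ici 0) ∧ γ * Fbar γ = 0 := by
  obtain ⟨hq0, hq1⟩ := hq
  set c := (1 - q) / q with hc_def
  set T := (1 + γ) / 2 with hT
  have hc : 0 < c := div_pos (by linarith) hq0
  have hT1 : 1 < T := by rw [hT]; linarith
  have hTγ : T < γ := by rw [hT]; linarith
  have hreg := isRegularCCDF_truncInvLinear hc (zero_lt_one.trans hT1)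
  have hF1 : truncInvLinear c T 1 = q := by
    rw [truncInvLinear_of_le hT1.le, hc_def]
    field_simp
    ring
  refine ⟨truncInvLinear c T, hreg, hF1, hreg.sSup_revenue_pos zero_le_one ?_, ?_⟩
  · rwa [hF1, one_mul]
  · rw [truncInvLinear_of_lt hTγ, mul_zero]
end

section
/- Let q ∈ (0,1), K ∈ ℕ with K ≥ 1, ε = q^{1/K}, and a_k = ε^k for k = 1,…,K. For indices 1 ≤ i ≤ k ≤ K one has Σ_{i=1}^{k} a_k/a_i = Σ_{i=0}^{k-1} ε^i ≤ 1/(1−ε), and for the remaining terms Σ_{i=k+1}^{K} (ε^{-i} − 1)/((ε^{-k} − 1) + (1/q)(1−ε)) ≤ 1/(1−ε)². Consequently (1/K)·max_{1≤k≤K}[Σ_{i=1}^{k} ε^{k-i} + Σ_{i=k+1}^{K} (ε^{-i}−1)/((ε^{-k}−1)+(1/q)(1−ε))] ≤ (1/K)(1/(1−ε) + 1/(1−ε)²). -/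
/-!
Everything is a geometric series in `ε`, using `ε ^ K = q`. The first sum is `∑_{i<k} εⁱ`.
In the second, dropping the `-1`s bounds each term by `ε⁻ⁱ / (ε⁻ᴷ (1 - ε)) = ε^(K-i) / (1 - ε)`,
and the sum of these over `k < i ≤ K` is at most `1 / (1 - ε)` times `1 / (1 - ε)`.
-/

open Finset

theorem Finset.sum_Icc_succ_sub_eq_sum_range {M : Type*} [AddCommMonoid M] (f : ℕ → M)
    (m n : ℕ) : ∑ i ∈ Icc (m + 1) n, f (n - i) = ∑ j ∈ range (n - m), f j := by
  apply sum_nbij' (fun i => n - i) (fun j => n - j) <;> intro a ha <;>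
    simp only [mem_Icc, mem_range] at ha ⊢ <;>
    omega

theorem Finset.sum_Icc_one_sub_eq_sum_range {M : Type*} [AddCommMonoid M] (f : ℕ → M)
    (n : ℕ) : ∑ i ∈ Icc 1 n, f (n - i) = ∑ j ∈ range n, f j := by
  simpa using sum_Icc_succ_sub_eq_sum_range f 0 n

theorem sum_Icc_pow_div_pow {R : Type*} [DivisionSemiring R] {x : R} (hx : x ≠ 0) (k : ℕ) :
    ∑ i ∈ Icc 1 k, x ^ k / x ^ i = ∑ i ∈ range k, x ^ i := by
  rw [← sum_Icc_one_sub_eq_sum_range]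
  refine sum_congr rfl fun i hi => ?_
  rw [pow_sub₀ x hx (mem_Icc.1 hi).2, div_eq_mul_inv]

section OrderedField

variable {𝕜 : Type*} [Field 𝕜] [LinearOrder 𝕜] [IsStrictOrderedRing 𝕜] {x : 𝕜}

theorem geom_sum_le_one_div_one_sub (hx₀ : 0 ≤ x) (hx₁ : x < 1) (n : ℕ) :
    ∑ i ∈ range n, x ^ i ≤ 1 / (1 - x) := by
  simpa only [pow_zero, ← range_eq_Ico] using
    geom_sum_Ico_le_of_lt_one (m := 0) (n := n) hx₀ hx₁

theorem inv_pow_sub_one_div_le (hx₀ : 0 < x) (hx₁ : x < 1) {i : ℕ} (k : ℕ) {K : ℕ}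
    (hiK : i ≤ K) :
    ((x ^ i)⁻¹ - 1) / (((x ^ k)⁻¹ - 1) + (1 / x ^ K) * (1 - x)) ≤ x ^ (K - i) / (1 - x) := by
  have hxk : 1 ≤ (x ^ k)⁻¹ := one_le_inv₀ (pow_pos hx₀ k) |>.2 (pow_le_one₀ hx₀.le hx₁.le)
  have hxi : 1 ≤ (x ^ i)⁻¹ := one_le_inv₀ (pow_pos hx₀ i) |>.2 (pow_le_one₀ hx₀.le hx₁.le)
  have hd : 0 < (1 / x ^ K) * (1 - x) := mul_pos (by positivity) (sub_pos.2 hx₁)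
  calc ((x ^ i)⁻¹ - 1) / (((x ^ k)⁻¹ - 1) + (1 / x ^ K) * (1 - x))
      ≤ (x ^ i)⁻¹ / ((1 / x ^ K) * (1 - x)) :=
        div_le_div₀ (by positivity) (by linarith) hd (by linarith)
    _ = x ^ (K - i) / (1 - x) := by
        rw [pow_sub₀ x hx₀.ne' hiK]
        field_simp

theorem sum_Icc_inv_pow_sub_one_div_le (hx₀ : 0 < x) (hx₁ : x < 1) (k K : ℕ) :
    ∑ i ∈ Icc (k + 1) K, ((x ^ i)⁻¹ - 1) / (((x ^ k)⁻¹ - 1) + (1 / x ^ K) * (1 - x))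
      ≤ 1 / (1 - x) ^ 2 := by
  have h1x : 0 < 1 - x := sub_pos.2 hx₁
  calc ∑ i ∈ Icc (k + 1) K, ((x ^ i)⁻¹ - 1) / (((x ^ k)⁻¹ - 1) + (1 / x ^ K) * (1 - x))
      ≤ ∑ i ∈ Icc (k + 1) K, x ^ (K - i) / (1 - x) :=
        sum_le_sum fun i hi => inv_pow_sub_one_div_le hx₀ hx₁ k (mem_Icc.1 hi).2
    _ = (∑ j ∈ range (K - k), x ^ j) / (1 - x) := by
        rw [← sum_div, sum_Icc_succ_sub_eq_sum_range (x ^ ·)]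
    _ ≤ 1 / (1 - x) / (1 - x) := by
        gcongr
        exact geom_sum_le_one_div_one_sub hx₀.le hx₁ _
    _ = 1 / (1 - x) ^ 2 := by rw [div_div, sq]

end OrderedField

/-- With ε = q^{1/K} and a_k = ε^k: for 1 ≤ k ≤ K,
Σ_{i=1}^{k} a_k/a_i = Σ_{i=0}^{k-1} ε^i ≤ 1/(1−ε),
Σ_{i=k+1}^{K} (ε^{-i} − 1)/((ε^{-k} − 1) + (1/q)(1−ε)) ≤ 1/(1−ε)², and consequently
(1/K)·[Σ_{i=1}^{k} ε^{k-i} + Σ_{i=k+1}^{K} (ε^{-i}−1)/((ε^{-k}−1)+(1/q)(1−ε))]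
  ≤ (1/K)(1/(1−ε) + 1/(1−ε)²). -/
theorem stmt_15 (q : ℝ) (hq : q ∈ Set.Ioo (0:ℝ) 1) (K : ℕ) (hK : 1 ≤ K)
    (ε : ℝ) (hε : ε = q ^ ((K : ℝ)⁻¹)) :
    ∀ k : ℕ, 1 ≤ k → k ≤ K →
      ((∑ i ∈ Finset.Icc 1 k, ε^k / ε^i) = (∑ i ∈ Finset.range k, ε^i) ∧
        (∑ i ∈ Finset.range k, ε^i) ≤ 1/(1 - ε)) ∧
      (∑ i ∈ Finset.Icc (k+1) K, ((ε^i)⁻¹ - 1)/(((ε^k)⁻¹ - 1) + (1/q)*(1 - ε)))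
        ≤ 1/(1 - ε)^2 ∧
      (1/(K:ℝ)) * ((∑ i ∈ Finset.Icc 1 k, ε^(k - i)) +
          ∑ i ∈ Finset.Icc (k+1) K, ((ε^i)⁻¹ - 1)/(((ε^k)⁻¹ - 1) + (1/q)*(1 - ε)))
        ≤ (1/(K:ℝ)) * (1/(1 - ε) + 1/(1 - ε)^2) := by
  obtain ⟨hq₀, hq₁⟩ := hq
  have hK₀ : (0 : ℝ) < K := by exact_mod_cast hK
  have hε₀ : 0 < ε := hε ▸ Real.rpow_pos_of_pos hq₀ _
  have hε₁ : ε < 1 := hε ▸ Real.rpow_lt_one hq₀.le hq₁ (inv_pos.2 hK₀)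
  have hεK : q = ε ^ K := by
    rw [hε, ← Real.rpow_natCast, ← Real.rpow_mul hq₀.le, inv_mul_cancel₀ hK₀.ne', Real.rpow_one]
  intro k _ _
  rw [hεK]
  have hfirst := geom_sum_le_one_div_one_sub hε₀.le hε₁ k
  have hsecond := sum_Icc_inv_pow_sub_one_div_le hε₀ hε₁ k K
  refine ⟨⟨sum_Icc_pow_div_pow hε₀.ne' k, hfirst⟩, hsecond, ?_⟩
  rw [sum_Icc_one_sub_eq_sum_range (ε ^ ·)]
  gcongr
end

section
/- Let q ∈ (0,1) and consider the price density dΨ(u) = 1/(u·log(1/q)) on [q, 1] (zero elsewhere). Then for every x ∈ [q, 1], (1/x)·[∫_q^x du + ∫_x^1 (1 + (1/q − 1)(u−x)/(1−x))^{-1} du] ≥ (1−q)/log(1/q). -/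
/-!
The integrand is the worst-case regular ccdf through `(x, 1)` and `(1, q)`, so it never drops
below `q` on `[x, 1]`. Hence the bracket is at least `(x - q) + q (1 - x) = x (1 - q)`, and the
ratio is at least `(1 - q) / log (1/q)`; the logarithmic integral need not be computed.
-/

open Set

lemma le_intervalIntegral_of_const_le {a b c : ℝ} {f : ℝ → ℝ} (hab : a ≤ b)
    (hf : ContinuousOn f (Icc a b)) (h : ∀ u ∈ Icc a b, c ≤ f u) :
    c * (b - a) ≤ ∫ u in a..b, f u := by
  have hf' : IntervalIntegrable f MeasureTheory.volume a b :=
    (hf.mono (uIcc_of_le hab).subset).intervalIntegrable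
  calc c * (b - a) = ∫ _ in a..b, c := by simp [mul_comm]
    _ ≤ ∫ u in a..b, f u := intervalIntegral.integral_mono_on hab intervalIntegrable_const hf' h

lemma sub_div_sub_mem_Icc {x u : ℝ} (hxu : x ≤ u) (hu : u ≤ 1) :
    (u - x) / (1 - x) ∈ Icc (0 : ℝ) 1 :=
  ⟨div_nonneg (by linarith) (by linarith), div_le_one_of_le₀ (by linarith) (by linarith)⟩

lemma one_div_sub_one_nonneg {q : ℝ} (hq : q ∈ Ioc (0 : ℝ) 1) : 0 ≤ 1 / q - 1 := by
  rw [sub_nonneg, le_div_iff₀ hq.1, one_mul]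
  exact hq.2

lemma le_inv_one_add_mul {q t : ℝ} (hq : q ∈ Ioc (0 : ℝ) 1) (ht : t ∈ Icc (0 : ℝ) 1) :
    q ≤ (1 + (1 / q - 1) * t)⁻¹ := by
  have hq' := one_div_sub_one_nonneg hq
  rw [le_inv_comm₀ hq.1 (by nlinarith [ht.1]), ← one_div]
  nlinarith [ht.2]

lemma continuousOn_inv_one_add_mul_sub_div {q x : ℝ} (hq : q ∈ Ioc (0 : ℝ) 1) :
    ContinuousOn (fun u ↦ (1 + (1 / q - 1) * (u - x) / (1 - x))⁻¹) (Icc x 1) := by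
  refine ContinuousOn.inv₀ (by fun_prop) fun u hu ↦ ?_
  have ht := sub_div_sub_mem_Icc hu.1 hu.2
  have hq' := one_div_sub_one_nonneg hq
  rw [mul_div_assoc]
  nlinarith [ht.1]

lemma mul_sub_le_integral_inv_one_add {q x : ℝ} (hq : q ∈ Ioc (0 : ℝ) 1) (hx : x ≤ 1) :
    q * (1 - x) ≤ ∫ u in x..(1 : ℝ), (1 + (1 / q - 1) * (u - x) / (1 - x))⁻¹ :=
  le_intervalIntegral_of_const_le hx (continuousOn_inv_one_add_mul_sub_div hq) fun u hu ↦ by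
    simpa only [mul_div_assoc] using le_inv_one_add_mul hq (sub_div_sub_mem_Icc hu.1 hu.2)

/-- With the price density dΨ(u) = 1/(u·log(1/q)) on [q,1],
for every x ∈ [q,1] the left-regime ratio satisfies
(1/(x·log(1/q)))·[∫_q^x du + ∫_x^1 (1 + (1/q − 1)(u−x)/(1−x))⁻¹ du]
  ≥ (1−q)/log(1/q). -/
theorem stmt_16 (q : ℝ) (hq : q ∈ Set.Ioo (0:ℝ) 1) :
    ∀ x ∈ Set.Icc q 1,
      (1 - q)/Real.log (1/q) ≤
        (1/(x * Real.log (1/q))) *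
          ((∫ _u in q..x, (1:ℝ)) +
            ∫ u in x..(1:ℝ), (1 + (1/q - 1)*(u - x)/(1 - x))⁻¹) := by
  rintro x ⟨hqx, hx1⟩
  have hx0 : 0 < x := hq.1.trans_le hqx
  have hlog : 0 ≤ Real.log (1 / q) := Real.log_nonneg (by rw [le_div_iff₀ hq.1]; linarith [hq.2])
  have hbracket : x * (1 - q) ≤ (∫ _u in q..x, (1:ℝ)) +
      ∫ u in x..(1:ℝ), (1 + (1/q - 1)*(u - x)/(1 - x))⁻¹ := by
    have := mul_sub_le_integral_inv_one_add (Ioo_subset_Ioc_self hq) hx1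
    simp only [intervalIntegral.integral_const, smul_eq_mul, mul_one]
    linarith
  calc (1 - q) / Real.log (1 / q) = 1 / (x * Real.log (1 / q)) * (x * (1 - q)) := by
        rw [one_div_mul_eq_div, mul_div_mul_left _ _ hx0.ne']
    _ ≤ _ := mul_le_mul_of_nonneg_left hbracket (by positivity)
end

section
/- Let q ∈ (0,1) and dΨ(u) = 1/(u·log(1/q)) on [q,1]. Then ∫_q^1 (1 + (1/q−1)u)^{-1}·(1/(u·log(1/q)))·u du = (1/(1/q − 1))·(1 − log(2−q)/log(1/q)), and since sup_{x≥1} x/(1+(1/q−1)x) = 1/(1/q−1), the right-regime ratio is at least 1 − log(2−q)/log(1/q). For q ∈ (0, 1 − 1/√2], both min{(1−q)/log(1/q), 1 − log(2−q)/log(1/q)} are at least log 2/log(1/q). -/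
open Real Set Filter Topology intervalIntegral
open scoped Interval

/-!
Since the density `1 / (u log (1/q))` cancels the factor `u`, the integral is
`∫_q^1 (1 + c u)⁻¹ du / log (1/q)` with `c = 1/q - 1`, a logarithm evaluated at
`1 + c = 1/q` and `1 + c q = 2 - q`. The map `x ↦ x / (1 + c x)` increases to `1/c`, which
gives the supremum and the ratio bound. The final inequalities reduce to `(1 - q)² ≥ 1/2`:
it gives `1 - q > 0.7 > log 2` and `2 q (2 - q) = 2 - 2 (1 - q)² ≤ 1`.
-/

lemma integral_inv_one_add_mul {a b c : ℝ} (hc : c ≠ 0) (h : (0 : ℝ) ∉ [[1 + c * a, 1 + c * b]]) :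
    ∫ u in a..b, (1 + c * u)⁻¹ = c⁻¹ * log ((1 + c * b) / (1 + c * a)) := by
  rw [integral_comp_add_mul (fun u => u⁻¹) hc, integral_inv h, smul_eq_mul]

lemma div_one_add_mul_lt_inv {c x : ℝ} (hc : 0 < c) (hx : 0 ≤ x) : x / (1 + c * x) < c⁻¹ := by
  rw [div_lt_iff₀ (by positivity)]
  field_simp
  linarith

lemma tendsto_div_one_add_mul_atTop {c : ℝ} (hc : c ≠ 0) :
    Tendsto (fun x => x / (1 + c * x)) atTop (𝓝 c⁻¹) := by
  have h : Tendsto (fun x : ℝ => (x⁻¹ + c)⁻¹) atTop (𝓝 (0 + c)⁻¹) :=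
    (tendsto_inv_atTop_zero.add tendsto_const_nhds).inv₀ (by simpa using hc)
  rw [zero_add] at h
  refine h.congr' ?_
  filter_upwards [eventually_gt_atTop 0] with x hx
  field_simp

lemma sSup_image_div_one_add_mul_Ici {a c : ℝ} (ha : 0 ≤ a) (hc : 0 < c) :
    sSup ((fun x => x / (1 + c * x)) '' Ici a) = c⁻¹ := by
  have hub : ∀ y ∈ (fun x => x / (1 + c * x)) '' Ici a, y ≤ c⁻¹ := by
    rintro _ ⟨x, hx, rfl⟩
    exact (div_one_add_mul_lt_inv hc (ha.trans hx)).le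
  refine le_antisymm (csSup_le (nonempty_Ici.image _) hub) ?_
  refine le_of_tendsto (tendsto_div_one_add_mul_atTop hc.ne') ?_
  filter_upwards [eventually_ge_atTop a] with x hx
  exact le_csSup ⟨c⁻¹, hub⟩ ⟨x, hx, rfl⟩

lemma log_two_sub_le_log_inv {q : ℝ} (hq0 : 0 < q) (hq2 : q < 2) : log (2 - q) ≤ log (1 / q) := by
  refine log_le_log (by linarith) ?_
  rw [le_div_iff₀ hq0]
  nlinarith [sq_nonneg (1 - q)]

lemma half_le_one_sub_sq {q : ℝ} (h : q ≤ 1 - 1 / √2) : 1 / 2 ≤ (1 - q) ^ 2 := by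
  have h2 : (1 / √2) ^ 2 = 1 / 2 := by rw [div_pow, sq_sqrt zero_le_two, one_pow]
  rw [← h2]
  exact pow_le_pow_left₀ (by positivity) (by linarith) 2

lemma log_two_le_one_sub {q : ℝ} (h : q ≤ 1 - 1 / √2) : log 2 ≤ 1 - q := by
  have hsq := half_le_one_sub_sq h
  have hpos : 0 < 1 - q := by linarith [show 0 < 1 / √2 by positivity]
  nlinarith [log_two_lt_d9, log_two_gt_d9]

lemma log_two_add_log_two_sub_le_log_inv {q : ℝ} (hq0 : 0 < q) (h : q ≤ 1 - 1 / √2) :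
    log 2 + log (2 - q) ≤ log (1 / q) := by
  have hsq := half_le_one_sub_sq h
  have hq1 : q < 1 := by linarith [show 0 < 1 / √2 by positivity]
  rw [← log_mul two_ne_zero (by linarith)]
  refine log_le_log (by nlinarith) ?_
  rw [le_div_iff₀ hq0]
  nlinarith

/-- With dΨ(u) = 1/(u·log(1/q)) on [q,1]:
∫_q^1 (1+(1/q−1)u)⁻¹·(1/(u·log(1/q)))·u du = (1/(1/q−1))·(1 − log(2−q)/log(1/q));
sup_{x ≥ 1} x/(1+(1/q−1)x) = 1/(1/q−1), so the right-regime ratio is at least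
1 − log(2−q)/log(1/q) for each x ≥ 1; and for q ∈ (0, 1−1/√2], both
(1−q)/log(1/q) and 1 − log(2−q)/log(1/q) are at least log 2/log(1/q). -/
theorem stmt_17 (q : ℝ) (hq : q ∈ Set.Ioo (0:ℝ) 1)
    (I : ℝ)
    (hI : I = ∫ u in q..(1:ℝ), (1 + (1/q - 1)*u)⁻¹ * (1/(u * Real.log (1/q))) * u) :
    I = (1/(1/q - 1)) * (1 - Real.log (2 - q)/Real.log (1/q)) ∧
    sSup ((fun x => x/(1 + (1/q - 1)*x)) '' Set.Ici 1) = 1/(1/q - 1) ∧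
    (∀ x : ℝ, 1 ≤ x →
      1 - Real.log (2 - q)/Real.log (1/q) ≤ I / (x/(1 + (1/q - 1)*x))) ∧
    (q ≤ 1 - 1/Real.sqrt 2 →
      Real.log 2/Real.log (1/q) ≤ (1 - q)/Real.log (1/q) ∧
      Real.log 2/Real.log (1/q) ≤ 1 - Real.log (2 - q)/Real.log (1/q)) := by
  obtain ⟨hq0, hq1⟩ := hq
  set L := log (1/q) with hL_def
  set c := 1/q - 1
  have hc : 0 < c := sub_pos.mpr (one_lt_one_div hq0 hq1)
  have hL : 0 < L := log_pos (one_lt_one_div hq0 hq1)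
  have hc_one : 1 + c * 1 = 1/q := by ring
  have hc_q : 1 + c * q = 2 - q := by simp only [c]; field_simp; ring
  have hI_eq : I = 1/c * (1 - log (2 - q)/L) := by
    have hintegrand : EqOn (fun u => (1 + c*u)⁻¹ * (1/(u * L)) * u)
        (fun u => L⁻¹ * (1 + c*u)⁻¹) [[q, 1]] := by
      intro u hu
      have : 0 < u := hq0.trans_le (uIcc_of_le hq1.le ▸ hu).1
      field_simp
    have h0 : (0:ℝ) ∉ [[1 + c * q, 1 + c * 1]] := notMem_uIcc_of_lt (by linarith) (by rw [hc_one]; positivity)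
    rw [hI, integral_congr hintegrand, integral_const_mul, integral_inv_one_add_mul hc.ne' h0,
      hc_one, hc_q, log_div (by positivity) (by linarith), ← hL_def]
    field_simp
  have hR : 0 ≤ 1 - log (2 - q)/L := by
    rw [sub_nonneg, div_le_one hL]
    exact log_two_sub_le_log_inv hq0 (by linarith)
  refine ⟨hI_eq, by rw [one_div]; exact sSup_image_div_one_add_mul_Ici zero_le_one hc, ?_, ?_⟩
  · intro x hx
    calc 1 - log (2 - q)/L = I / c⁻¹ := by rw [hI_eq]; field_simp
      _ ≤ I / (x/(1 + c*x)) :=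
        div_le_div_of_nonneg_left (by rw [hI_eq]; positivity) (by positivity)
          (div_one_add_mul_lt_inv hc (by linarith)).le
  · intro h
    refine ⟨div_le_div_of_nonneg_right (log_two_le_one_sub h) hL.le, ?_⟩
    rw [le_sub_iff_add_le, ← add_div, div_le_one hL]
    exact log_two_add_log_two_sub_le_log_inv hq0 h
end

section
/- Let q ∈ (1/2, 1) and let Rev(r) = r/(1 + (1/q − 1)r) for r ≥ 1 (the worst-case regular revenue at r). Define the probability measure dλ(r) = (1/log(1/(1−q)))·Rev'(r)/Rev(r) dr on [1, ∞). Then for every p ≥ 0, ∫ p·F̄_r(p)/Rev(r) dλ(r) ≤ (1/log(1/(1−q)))·(1 − (1/q − 1)·p·H̄₀(p)) ≤ 1/log(1/(1−q)), where H̄₀(p) = 1/(1 + (1/q−1)p) and F̄_r(p) = H̄₀(p) for p ≤ r and 0 for p > r. -/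
/-!
With `c = 1/q - 1` and `Rev r = r / (1 + c r)` one has `Rev' r / (Rev r)² = r⁻²`, so the
integrand is `K p H̄₀(p) r⁻²` on `r ≥ p` and vanishes otherwise (`K = 1 / log (1/(1-q))`).
Integrating over `r > 1` gives `K H̄₀(p) · p / max 1 p ≤ K H̄₀(p) = K (1 - c p H̄₀(p)) ≤ K`.
-/

open MeasureTheory Set

theorem hasDerivAt_div_one_add_mul {c r : ℝ} (hr : 1 + c * r ≠ 0) :
    HasDerivAt (fun x => x / (1 + c * x)) (1 / (1 + c * r) ^ 2) r := by
  have hden : HasDerivAt (fun x => 1 + c * x) c r := by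
    simpa using ((hasDerivAt_id r).const_mul c).const_add 1
  refine ((hasDerivAt_id' r).div hden hr).congr_deriv ?_
  ring

theorem integral_Ioi_rpow_neg_two {a : ℝ} (ha : 0 < a) :
    ∫ r in Ioi a, r ^ (-2 : ℝ) = a⁻¹ := by
  rw [integral_Ioi_rpow_of_lt (by norm_num) ha]
  norm_num [Real.rpow_neg_one]

theorem integral_Ioi_inter_Ici_rpow_neg_two (p : ℝ) :
    ∫ r in Ioi 1 ∩ Ici p, r ^ (-2 : ℝ) = (max 1 p)⁻¹ := by
  rw [setIntegral_congr_set ((ae_eq_refl _).inter Ioi_ae_eq_Ici.symm), Ioi_inter_Ioi,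
    integral_Ioi_rpow_neg_two (lt_max_of_lt_left one_pos)]

theorem revenue_ratio_integrand_eq {c r : ℝ} (hc : 0 ≤ c) (hr : 0 < r) (K p : ℝ) :
    (p * (if p ≤ r then (1 + c * p)⁻¹ else 0) / (r / (1 + c * r))) *
        (K * deriv (fun x => x / (1 + c * x)) r / (r / (1 + c * r))) =
      (Ici p).indicator (fun r => K * p * (1 + c * p)⁻¹ * r ^ (-2 : ℝ)) r := by
  have hden : 0 < 1 + c * r := by positivity
  rw [(hasDerivAt_div_one_add_mul hden.ne').deriv]
  by_cases hpr : p ≤ r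
  · rw [if_pos hpr, indicator_of_mem (mem_Ici.2 hpr), Real.rpow_neg hr.le,
      Real.rpow_two]
    field_simp
  · rw [if_neg hpr, indicator_of_notMem (by simpa using hpr)]
    ring

theorem integral_revenue_ratio {c : ℝ} (hc : 0 ≤ c) (K p : ℝ) :
    ∫ r in Ioi 1, (p * (if p ≤ r then (1 + c * p)⁻¹ else 0) / (r / (1 + c * r))) *
        (K * deriv (fun x => x / (1 + c * x)) r / (r / (1 + c * r))) =
      K * (1 + c * p)⁻¹ * (p / max 1 p) := by
  rw [setIntegral_congr_fun measurableSet_Ioi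
      fun r hr => revenue_ratio_integrand_eq hc (zero_lt_one.trans hr) K p,
    setIntegral_indicator measurableSet_Ici, integral_const_mul,
    integral_Ioi_inter_Ici_rpow_neg_two]
  ring

theorem div_max_one_le_one {p : ℝ} (hp : 0 ≤ p) : p / max 1 p ≤ 1 :=
  div_le_one_of_le₀ (le_max_right 1 p) (hp.trans (le_max_right 1 p))

/-- For q ∈ (1/2,1), Rev(r) = r/(1+(1/q−1)r), H̄₀(p) = (1+(1/q−1)p)⁻¹,
F̄_r(p) = H̄₀(p) for p ≤ r and 0 for p > r, and the probability density
dλ(r) = (1/log(1/(1−q)))·Rev'(r)/Rev(r) on [1,∞): for every p ≥ 0,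
∫ p·F̄_r(p)/Rev(r) dλ(r) ≤ (1/log(1/(1−q)))·(1 − (1/q−1)·p·H̄₀(p)) ≤ 1/log(1/(1−q)). -/
theorem stmt_19 (q : ℝ) (hq : q ∈ Set.Ioo (1/2 : ℝ) 1)
    (Rev : ℝ → ℝ) (hRev : ∀ r : ℝ, Rev r = r/(1 + (1/q - 1)*r))
    (Hbar : ℝ → ℝ) (hHbar : ∀ p : ℝ, Hbar p = (1 + (1/q - 1)*p)⁻¹)
    (Fbar : ℝ → ℝ → ℝ)
    (hFbar : ∀ r p : ℝ, Fbar r p = if p ≤ r then Hbar p else 0)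
    (p : ℝ) (hp : 0 ≤ p) :
    (∫ r in Set.Ioi (1:ℝ),
        (p * Fbar r p / Rev r) * ((1/Real.log (1/(1 - q))) * deriv Rev r / Rev r))
      ≤ (1/Real.log (1/(1 - q))) * (1 - (1/q - 1) * p * Hbar p) ∧
    (1/Real.log (1/(1 - q))) * (1 - (1/q - 1) * p * Hbar p)
      ≤ 1/Real.log (1/(1 - q)) := by
  obtain ⟨hq_gt, hq_lt⟩ := hq
  obtain rfl : Rev = fun r => r / (1 + (1/q - 1) * r) := funext hRev
  simp only [hFbar, hHbar]
  set c := 1/q - 1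
  set K := 1 / Real.log (1 / (1 - q))
  have hc : 0 ≤ c := by
    rw [sub_nonneg, le_div_iff₀ (by linarith)]; linarith
  have hK : 0 ≤ K :=
    one_div_nonneg.2 (Real.log_nonneg (one_le_one_div (by linarith) (by linarith)))
  have hcp : 0 < 1 + c * p := by positivity
  have hH : 1 - c * p * (1 + c * p)⁻¹ = (1 + c * p)⁻¹ := by
    field_simp; ring
  rw [integral_revenue_ratio hc, hH]
  refine ⟨?_, ?_⟩
  · exact mul_le_of_le_one_right (by positivity) (div_max_one_le_one hp)
  · exact mul_le_of_le_one_right hK (inv_le_one_of_one_le₀ (by nlinarith))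
end
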